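/- arXiv:0912.4978 — 2 statements merged into one kernel-verified Lean document; each statement's English description precedes it below -/
import Mathlib

section
/- Let D be a finite homomorphism-homogeneous reflexive bidirectionally disconnected improper digraph with no back-and-forth. Then for all distinct θ(D)-classes S, T: either there is no edge between S and T in either direction, or every vertex of S has an edge to every vertex of T, or every vertex of T has an edge to every vertex of S. -/
/-- A digraph `(V, E)` is homomorphism-homogeneous if every homomorphism between finitely
induced subdigraphs extends to an endomorphism. -/
def IsHomHom {V : Type*} (E : V → V → Prop) : Prop :=
  ∀ (U : Set V) (f : V → V), U.Finite →
    (∀ x ∈ U, ∀ y ∈ U, E x y → E (f x) (f y)) →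
    ∃ g : V → V, (∀ x y, E x y → E (g x) (g y)) ∧ ∀ x ∈ U, g x = f x

/-- The bidirectional connectedness relation `θ(D)`: the equivalence closure of the
double-edge relation `⇄`. -/
def Theta {V : Type*} (E : V → V → Prop) : V → V → Prop :=
  Relation.EqvGen (fun a b => E a b ∧ E b a)

/-- `E` is improper: neither symmetric nor antisymmetric. -/
def Improper {V : Type*} (E : V → V → Prop) : Prop :=
  (∃ x y, x ≠ y ∧ E x y ∧ E y x) ∧ (∃ x y, E x y ∧ ¬ E y x)

/-- `D` is bidirectionally disconnected: there is an edge between two distinct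
`θ(D)`-classes. -/
def BidirDisconnected {V : Type*} (E : V → V → Prop) : Prop :=
  ∃ x y, ¬ Theta E x y ∧ E x y

/-!
If some edge runs from the class `S` of `x` to the class `T` of `y` but none runs back, pick
`s ∈ S`, `t ∈ T`. Were `s ↛ t`, the pair `{s, t}` would carry no edges but its loops, so the
transposition of `s` and `t` is a homomorphism on it and extends to an endomorphism `g`. As `g`
preserves `⇄` it maps `S` into `T` and `T` into `S`, so it turns an edge from `S` to `T` into
one from `T` to `S`. Hence `S ⇉ T`; with no back-and-forth, the trichotomy follows.
-/

section

variable {V : Type*} {E : V → V → Prop}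

theorem Theta.symm {a b : V} (h : Theta E a b) : Theta E b a :=
  Relation.EqvGen.symm _ _ h

theorem Theta.trans {a b c : V} (hab : Theta E a b) (hbc : Theta E b c) : Theta E a c :=
  Relation.EqvGen.trans _ _ _ hab hbc

theorem Theta.map {g : V → V} (hg : ∀ a b, E a b → E (g a) (g b)) {a b : V}
    (h : Theta E a b) : Theta E (g a) (g b) := by
  induction h with
  | rel a b h => exact Relation.EqvGen.rel _ _ ⟨hg _ _ h.1, hg _ _ h.2⟩
  | refl a => exact Relation.EqvGen.refl _
  | symm a b _ ih => exact ih.symm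
  | trans a b c _ _ ih₁ ih₂ => exact ih₁.trans ih₂

namespace IsHomHom

theorem exists_swap (hhh : IsHomHom E) (hrefl : ∀ x, E x x) {s t : V}
    (hst : ¬ E s t) (hts : ¬ E t s) :
    ∃ g : V → V, (∀ a b, E a b → E (g a) (g b)) ∧ g s = t ∧ g t = s := by
  classical
  have hloops : ∀ a ∈ ({s, t} : Set V), ∀ b ∈ ({s, t} : Set V), E a b → a = b := by
    rintro a (rfl | rfl) b (rfl | rfl) hab <;> first | rfl | contradiction
  obtain ⟨g, hg, hgU⟩ := hhh {s, t} (Equiv.swap s t) (Set.toFinite _)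
    fun a ha b hb hab => hloops a ha b hb hab ▸ hrefl _
  exact ⟨g, hg, by simp [hgU], by simp [hgU]⟩

theorem forall_edge_of_not_exists_reverse (hhh : IsHomHom E) (hrefl : ∀ x, E x x) {x y : V}
    (hxy : ∃ s t, Theta E s x ∧ Theta E t y ∧ E s t)
    (hyx : ¬ ∃ s t, Theta E s y ∧ Theta E t x ∧ E s t) :
    ∀ s t, Theta E s x → Theta E t y → E s t := by
  intro s' t' hs' ht'
  by_contra hst
  obtain ⟨g, hg, hgs, hgt⟩ :=
    hhh.exists_swap hrefl hst fun hts => hyx ⟨t', s', ht', hs', hts⟩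
  obtain ⟨s, t, hs, ht, hedge⟩ := hxy
  have hgs_mem : Theta E (g s) y := (hgs ▸ Theta.map hg (hs.trans hs'.symm)).trans ht'
  have hgt_mem : Theta E (g t) x := (hgt ▸ Theta.map hg (ht.trans ht'.symm)).trans hs'
  exact hyx ⟨g s, g t, hgs_mem, hgt_mem, hg _ _ hedge⟩

end IsHomHom

end

theorem stmt_14_general {V : Type*} (E : V → V → Prop)
    (hrefl : ∀ x, E x x)
    (hnbf : ∀ x y, (∃ s t, Theta E s x ∧ Theta E t y ∧ E s t) →
      (∃ s t, Theta E s x ∧ Theta E t y ∧ E t s) → Theta E x y)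
    (hhh : IsHomHom E) :
    ∀ x y, ¬ Theta E x y →
      (∀ s t, Theta E s x → Theta E t y → ¬ E s t ∧ ¬ E t s) ∨
      (∀ s t, Theta E s x → Theta E t y → E s t) ∨
      (∀ s t, Theta E s x → Theta E t y → E t s) := by
  intro x y hxy
  by_cases hST : ∃ s t, Theta E s x ∧ Theta E t y ∧ E s t <;>
    by_cases hTS : ∃ s t, Theta E s y ∧ Theta E t x ∧ E s t
  · obtain ⟨s, t, hs, ht, h⟩ := hTS
    exact absurd (hnbf x y hST ⟨t, s, ht, hs, h⟩) hxy
  · exact Or.inr (Or.inl (hhh.forall_edge_of_not_exists_reverse hrefl hST hTS))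
  · exact Or.inr (Or.inr fun s t hs ht =>
      hhh.forall_edge_of_not_exists_reverse hrefl hTS hST t s ht hs)
  · exact Or.inl fun s t hs ht => ⟨fun h => hST ⟨s, t, hs, ht, h⟩, fun h => hTS ⟨t, s, ht, hs, h⟩⟩

/-- Let `D` be a finite homomorphism-homogeneous reflexive bidirectionally
disconnected improper digraph with no back-and-forth. Then for all distinct
`θ(D)`-classes `S = [x]`, `T = [y]`: either there are no edges between `S` and `T`, or
`S ⇉ T`, or `T ⇉ S`. -/
theorem stmt_14 {V : Type*} [Fintype V] (E : V → V → Prop)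
    (hrefl : ∀ x, E x x) (himp : Improper E) (hbd : BidirDisconnected E)
    (hnbf : ∀ x y, (∃ s t, Theta E s x ∧ Theta E t y ∧ E s t) →
      (∃ s t, Theta E s x ∧ Theta E t y ∧ E t s) → Theta E x y)
    (hhh : IsHomHom E) :
    ∀ x y, ¬ Theta E x y →
      (∀ s t, Theta E s x → Theta E t y → ¬ E s t ∧ ¬ E t s) ∨
      (∀ s t, Theta E s x → Theta E t y → E s t) ∨
      (∀ s t, Theta E s x → Theta E t y → E t s) :=
  stmt_14_general E hrefl hnbf hhh
end

section
/- A finite reflexive proper digraph D is homomorphism-homogeneous if and only if every inflation of D is homomorphism-homogeneous. (In particular, since D is an inflation of itself with all singleton classes, the backward direction is immediate; the forward direction states that inflations preserve homomorphism-homogeneity.) -/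
/-- The inflation of a digraph `(V, E)` along a family of classes `W v`: the vertex set is
`Σ v, W v`, with all edges inside each class, and all edges from class `v` to class `u`
whenever `v ≠ u` and `E v u`. -/
def InflEdge {V : Type*} (E : V → V → Prop) (W : V → Type*) :
    (Σ v, W v) → (Σ v, W v) → Prop :=
  fun a b => a.1 = b.1 ∨ E a.1 b.1

/-!
A retract of a homomorphism-homogeneous digraph is homomorphism-homogeneous: conjugate a local
homomorphism by the section and the retraction, extend it upstairs and project back down.
Since `D` is a retract of its inflation by singletons, this gives the backward direction.

Conversely, in an inflation of a proper digraph a local homomorphism `f` cannot split a class: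
two points of one class are joined both ways, so their images are joined both ways and
properness forces them into one class. Hence `f` induces a local homomorphism of `D` on the
classes it meets; extend that one in `D`, and lift the extension back to the inflation by keeping
`f` on its domain and sending every other vertex to an arbitrary point of the target class.
-/

theorem IsHomHom.of_retract {V V' : Type*} {E : V → V → Prop} {E' : V' → V' → Prop}
    (i : V → V') (r : V' → V) (hi : ∀ x y, E x y → E' (i x) (i y))
    (hr : ∀ x y, E' x y → E (r x) (r y)) (hri : ∀ x, r (i x) = x) (h : IsHomHom E') :
    IsHomHom E := by
  intro U f hU hf
  have hf' : ∀ x ∈ i '' U, ∀ y ∈ i '' U, E' x y → E' (i (f (r x))) (i (f (r y))) := by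
    rintro _ ⟨x, hx, rfl⟩ _ ⟨y, hy, rfl⟩ hxy
    rw [hri, hri]
    exact hi _ _ (hf x hx y hy (by simpa only [hri] using hr _ _ hxy))
  obtain ⟨g, hg, hgf⟩ := h (i '' U) (fun x => i (f (r x))) (hU.image i) hf'
  refine ⟨fun x => r (g (i x)), fun x y hxy => hr _ _ (hg _ _ (hi _ _ hxy)), fun x hx => ?_⟩
  simp only [hgf _ (Set.mem_image_of_mem i hx), hri]

section Inflation

variable {V : Type*} {E : V → V → Prop} {W : V → Type*}

theorem inflEdge_iff (hrefl : ∀ x, E x x) {a b : Σ v, W v} :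
    InflEdge E W a b ↔ E a.1 b.1 :=
  ⟨fun h => h.elim (fun hab => hab ▸ hrefl _) id, Or.inr⟩

theorem IsHomHom.of_inflEdge (hrefl : ∀ x, E x x) (h : IsHomHom (InflEdge E (fun _ => PUnit))) :
    IsHomHom E :=
  h.of_retract (fun v => ⟨v, ⟨⟩⟩) Sigma.fst (fun _ _ => Or.inr)
    (fun _ _ => (inflEdge_iff hrefl).1) (fun _ => rfl)

theorem fst_eq_of_inflEdge_hom (hproper : ∀ x y, x ≠ y → E x y → ¬ E y x)
    {U : Set (Σ v, W v)} {f : (Σ v, W v) → Σ v, W v}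
    (hf : ∀ a ∈ U, ∀ b ∈ U, InflEdge E W a b → InflEdge E W (f a) (f b))
    {a b : Σ v, W v} (ha : a ∈ U) (hb : b ∈ U) (hab : a.1 = b.1) : (f a).1 = (f b).1 := by
  by_contra hne
  have hfab := (hf a ha b hb (Or.inl hab)).resolve_left hne
  have hfba := (hf b hb a ha (Or.inl hab.symm)).resolve_left (Ne.symm hne)
  exact hproper _ _ hne hfab hfba

theorem IsHomHom.inflEdge (hrefl : ∀ x, E x x) (hproper : ∀ x y, x ≠ y → E x y → ¬ E y x)
    (hne : ∀ v, Nonempty (W v)) (h : IsHomHom E) : IsHomHom (InflEdge E W) := by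
  classical
  intro U f hU hf
  have hfactor : Function.FactorsThrough (fun a : U => (f a).1) (fun a : U => a.1.1) :=
    fun a b hab => fst_eq_of_inflEdge_hom hproper hf a.2 b.2 hab
  set φ := Function.extend (fun a : U => a.1.1) (fun a : U => (f a).1) id
  have hφ : ∀ a ∈ U, φ a.1 = (f a).1 := fun a ha => hfactor.extend_apply id ⟨a, ha⟩
  have hφhom : ∀ x ∈ Sigma.fst '' U, ∀ y ∈ Sigma.fst '' U, E x y → E (φ x) (φ y) := by
    rintro _ ⟨a, ha, rfl⟩ _ ⟨b, hb, rfl⟩ hab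
    rw [hφ a ha, hφ b hb]
    exact (inflEdge_iff hrefl).1 (hf a ha b hb (Or.inr hab))
  obtain ⟨g, hg, hgφ⟩ := h (Sigma.fst '' U) φ (hU.image _) hφhom
  set F : (Σ v, W v) → Σ v, W v := fun a => if a ∈ U then f a else ⟨g a.1, (hne _).some⟩
  have hFfst : ∀ a, (F a).1 = g a.1 := by
    intro a
    by_cases ha : a ∈ U
    · simp only [F, if_pos ha, hgφ _ (Set.mem_image_of_mem _ ha), hφ a ha]
    · simp only [F, if_neg ha]
  refine ⟨F, fun a b hab => ?_, fun a ha => if_pos ha⟩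
  rw [inflEdge_iff hrefl, hFfst, hFfst]
  exact hg _ _ ((inflEdge_iff hrefl).1 hab)

end Inflation

theorem stmt_18_general {V : Type} (E : V → V → Prop)
    (hrefl : ∀ x, E x x)
    (hproper : ∀ x y, x ≠ y → E x y → ¬ E y x) :
    IsHomHom E ↔
      ∀ (W : V → Type) (_ : ∀ v, Fintype (W v)) (_ : ∀ v, Nonempty (W v)),
        IsHomHom (InflEdge E W) :=
  ⟨fun h _ _ hne => h.inflEdge hrefl hproper hne,
    fun h => IsHomHom.of_inflEdge hrefl (h _ (fun _ => inferInstance) fun _ => ⟨⟨⟩⟩)⟩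

/-- A finite reflexive proper digraph is homomorphism-homogeneous iff
every inflation of it (by finite nonempty classes) is homomorphism-homogeneous. -/
theorem stmt_18 {V : Type} [Fintype V] (E : V → V → Prop)
    (hrefl : ∀ x, E x x)
    (hproper : ∀ x y, x ≠ y → E x y → ¬ E y x) :
    IsHomHom E ↔
      ∀ (W : V → Type) (_ : ∀ v, Fintype (W v)) (_ : ∀ v, Nonempty (W v)),
        IsHomHom (InflEdge E W) :=
  stmt_18_general E hrefl hproper
end
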